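/- arXiv:2504.06406 — 4 statements merged into one kernel-verified Lean document; each statement's English description precedes it below -/
import Mathlib

section
/- Let G be a finite connected simple graph on a vertex set V with an edge-weight function w assigning a real weight to each edge, and suppose w is injective on the edge set (all edge weights are distinct). Let T be a minimum spanning tree of G, i.e., a spanning subgraph of G that is a tree and whose total edge weight is less than or equal to that of every spanning subgraph of G that is a tree. Then for every pair of vertices S and D, the unique path from S to D in T is a minimax (safest) path in G: the maximum edge weight appearing on this path is less than or equal to the maximum edge weight appearing on every path from S to D in G. -/
/-! Cut property: if `e` is an edge of a minimum spanning tree `T`, then every edge of `G` joining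
the two components of `T - e` weighs at least `w e`, since exchanging it for `e` gives another
spanning tree. An edge `e` of the tree path from `S` to `D` separates `S` from `D` in `T - e`, so
every `S`–`D` walk in `G` crosses this cut along an edge at least as heavy as `e`. -/

open SimpleGraph

def IsSpanningTree {V : Type*} (G T : SimpleGraph V) : Prop :=
  T ≤ G ∧ T.IsTree

noncomputable def totalWeight {V : Type*} [Fintype V] (w : Sym2 V → ℝ)
    (T : SimpleGraph V) : ℝ :=
  ∑ e ∈ T.edgeSet.toFinite.toFinset, w e

def IsMinSpanningTree {V : Type*} [Fintype V] (w : Sym2 V → ℝ) (G T : SimpleGraph V) : Prop :=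
  IsSpanningTree G T ∧ ∀ T', IsSpanningTree G T' → totalWeight w T ≤ totalWeight w T'

section totalWeight

variable {V : Type*} [Fintype V] (w : Sym2 V → ℝ)

lemma totalWeight_deleteEdges_singleton {T : SimpleGraph V} {e : Sym2 V} (he : e ∈ T.edgeSet) :
    totalWeight w (T.deleteEdges {e}) = totalWeight w T - w e := by
  classical
  have hfin : (T.deleteEdges {e}).edgeSet.toFinite.toFinset =
      T.edgeSet.toFinite.toFinset.erase e := by
    ext; simp [and_comm]
  rw [totalWeight, totalWeight, hfin, Finset.sum_erase_eq_sub (by simpa using he)]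

lemma totalWeight_sup_edge {H : SimpleGraph V} {a b : V} (hab : a ≠ b) (hnadj : ¬H.Adj a b) :
    totalWeight w (H ⊔ edge a b) = totalWeight w H + w s(a, b) := by
  classical
  have hfin : (H ⊔ edge a b).edgeSet.toFinite.toFinset =
      insert s(a, b) H.edgeSet.toFinite.toFinset := by
    ext; simp [edgeSet_edge_of_ne hab]
  rw [totalWeight, totalWeight, hfin, Finset.sum_insert (by simpa using hnadj), add_comm]

end totalWeight

namespace SimpleGraph

variable {V : Type*}

lemma Walk.mem_edges_of_isAcyclic_of_isPath {G : SimpleGraph V} (hG : G.IsAcyclic) {S D : V}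
    {p : G.Walk S D} (hp : p.IsPath) {e : Sym2 V} (he : e ∈ p.edges) (q : G.Walk S D) :
    e ∈ q.edges := by
  classical
  have hpq : (⟨p, hp⟩ : G.Path S D) = q.toPath := (hG.subsingleton_path S D).elim _ _
  exact q.edges_toPath_subset_edges (by rwa [← hpq])

lemma Preconnected.reachable_or_reachable_deleteEdges {G : SimpleGraph V} (hG : G.Preconnected)
    (u v x : V) :
    (G.deleteEdges {s(u, v)}).Reachable u x ∨ (G.deleteEdges {s(u, v)}).Reachable v x := by
  by_contra! hx
  obtain ⟨p⟩ := hG u x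
  obtain ⟨d, -, hd, hd'⟩ := p.exists_boundary_dart
    {y | (G.deleteEdges {s(u, v)}).Reachable u y ∨ (G.deleteEdges {s(u, v)}).Reachable v y}
    (.inl .rfl) (by simpa using hx)
  by_cases he : s(d.fst, d.snd) = s(u, v)
  · rcases Sym2.eq_iff.mp he with ⟨-, h⟩ | ⟨-, h⟩ <;> simp [h] at hd'
  · have hadj : (G.deleteEdges {s(u, v)}).Adj d.fst d.snd := by simp [d.adj, he]
    exact hd' (hd.imp (·.trans hadj.reachable) (·.trans hadj.reachable))

lemma IsTree.sup_edge_deleteEdges {T : SimpleGraph V} (hT : T.IsTree) {u v a b : V}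
    (hab : ¬(T.deleteEdges {s(u, v)}).Reachable a b) :
    (T.deleteEdges {s(u, v)} ⊔ edge a b).IsTree := by
  set H := T.deleteEdges {s(u, v)}
  have hside := hT.connected.preconnected.reachable_or_reachable_deleteEdges u v
  have hH : H ≤ H ⊔ edge a b := le_sup_left
  have hedge : (H ⊔ edge a b).Reachable a b :=
    Adj.reachable <| Or.inr <|
      (edge_adj a b a b).mpr ⟨.inl ⟨rfl, rfl⟩, fun h => hab (h ▸ .rfl)⟩
  have huv : (H ⊔ edge a b).Reachable u v := by
    rcases hside a with hua | hva <;> rcases hside b with hub | hvb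
    · exact absurd (hua.symm.trans hub) hab
    · exact (hua.mono hH).trans (hedge.trans (hvb.symm.mono hH))
    · exact (hub.mono hH).trans (hedge.symm.trans (hva.symm.mono hH))
    · exact absurd (hva.symm.trans hvb) hab
  refine ⟨connected_iff_exists_forall_reachable _ |>.mpr ⟨u, fun x => ?_⟩,
    (hT.isAcyclic.anti (deleteEdges_le _)).sup_edge_of_not_reachable hab⟩
  rcases hside x with hux | hvx
  · exact hux.mono hH
  · exact huv.trans (hvx.mono hH)

end SimpleGraph

namespace IsMinSpanningTree

variable {V : Type*} [Fintype V] {w : Sym2 V → ℝ} {G T : SimpleGraph V}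

lemma weight_le_of_not_reachable_deleteEdges (hT : IsMinSpanningTree w G T) {u v a b : V}
    (huv : T.Adj u v) (hab : G.Adj a b) (hcut : ¬(T.deleteEdges {s(u, v)}).Reachable a b) :
    w s(u, v) ≤ w s(a, b) := by
  set H := T.deleteEdges {s(u, v)}
  have hspan : IsSpanningTree G (H ⊔ edge a b) :=
    ⟨sup_le ((deleteEdges_le _).trans hT.1.1) ((edge_le_iff G).mpr (.inr hab)),
      hT.1.2.sup_edge_deleteEdges hcut⟩
  have hweight : totalWeight w (H ⊔ edge a b) = totalWeight w T - w s(u, v) + w s(a, b) := by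
    rw [totalWeight_sup_edge w hab.ne (fun h => hcut h.reachable),
      totalWeight_deleteEdges_singleton w huv]
  linarith [hT.2 _ hspan]

lemma exists_mem_edges_weight_le (hT : IsMinSpanningTree w G T) {S D : V} {pT : T.Walk S D}
    (hpT : pT.IsPath) {e : Sym2 V} (he : e ∈ pT.edges) (pG : G.Walk S D) :
    ∃ f ∈ pG.edges, w e ≤ w f := by
  induction e using Sym2.ind with
  | _ u v =>
  set H := T.deleteEdges {s(u, v)}
  have hSD : ¬H.Reachable S D := by
    rw [reachable_deleteEdges_iff_exists_walk, not_exists_not]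
    exact pT.mem_edges_of_isAcyclic_of_isPath hT.1.2.isAcyclic hpT he
  obtain ⟨d, hd, hSa, hSb⟩ := pG.exists_boundary_dart {x | H.Reachable S x} .rfl hSD
  exact ⟨d.edge, pG.edges_eq_map_darts ▸ List.mem_map_of_mem hd,
    hT.weight_le_of_not_reachable_deleteEdges (pT.adj_of_mem_edges he) d.adj
      fun hab => hSb (hSa.trans hab)⟩

end IsMinSpanningTree

theorem mst_path_is_minimax_general {V : Type*} [Fintype V]
    (G : SimpleGraph V)
    (w : Sym2 V → ℝ)
    (T : SimpleGraph V) (hT : IsSpanningTree G T)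
    (hmin : ∀ T', IsSpanningTree G T' → totalWeight w T ≤ totalWeight w T')
    (S D : V)
    (pT : T.Walk S D) (hpT : pT.IsPath)
    (pG : G.Walk S D) :
    (pT.edges.map w).maximum ≤ (pG.edges.map w).maximum := by
  have hmst : IsMinSpanningTree w G T := ⟨hT, hmin⟩
  refine List.maximum_le_of_forall_le fun x hx => ?_
  obtain ⟨e, he, rfl⟩ := List.mem_map.mp hx
  obtain ⟨f, hf, hef⟩ := hmst.exists_mem_edges_weight_le hpT he pG
  exact (WithBot.coe_le_coe.mpr hef).trans (List.le_maximum_of_mem' (List.mem_map_of_mem hf))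

/-- If `T` is a minimum spanning tree of a finite connected graph `G` whose edge
weights are all distinct, then for every pair of vertices `S`, `D`, the (unique)
path from `S` to `D` in `T` is a minimax (safest) path in `G`: its maximum edge
weight is at most the maximum edge weight of every `S`–`D` path in `G`. -/
theorem mst_path_is_minimax {V : Type*} [Fintype V]
    (G : SimpleGraph V) (hG : G.Connected)
    (w : Sym2 V → ℝ) (hw : Set.InjOn w G.edgeSet)
    (T : SimpleGraph V) (hT : IsSpanningTree G T)
    (hmin : ∀ T', IsSpanningTree G T' → totalWeight w T ≤ totalWeight w T')
    (S D : V)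
    (pT : T.Walk S D) (hpT : pT.IsPath)
    (pG : G.Walk S D) (hpG : pG.IsPath) :
    (pT.edges.map w).maximum ≤ (pG.edges.map w).maximum :=
  mst_path_is_minimax_general G w T hT hmin S D pT hpT pG
end

section
/- Let G be a finite connected simple graph with edge-weight function w : E(G) → ℝ such that w(e) ≥ 1 for every edge e, and fix two vertices S and D. Then there exists a natural number K such that for all k ≥ K, every path P from S to D that minimizes the transformed length ∑_{e ∈ P} w(e)^k among all S–D paths also minimizes the maximum edge weight among all S–D paths (i.e., P is a minimax path from S to D). -/
/-!
Let `Q₀` be a minimax `S`–`D` path, with bottleneck weight `μ ≥ 1`. A path has fewer than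
`|V|` edges, so the transformed length of `Q₀` is at most `|V| μ^k`. Any edge heavier than `μ`
has weight `b > μ`, and since there are finitely many edges, for `k` large `|V| μ^k < b^k` for
all of them at once. A transformed shortest path therefore carries no edge heavier than `μ`.
-/

open SimpleGraph Filter

theorem eventually_mul_pow_lt_pow {a b : ℝ} (ha : 0 < a) (hab : a < b) (C : ℝ) :
    ∀ᶠ k : ℕ in atTop, C * a ^ k < b ^ k := by
  filter_upwards [(tendsto_pow_atTop_atTop_of_one_lt ((one_lt_div ha).2 hab)).eventually_gt_atTop C]
    with k hk
  rwa [div_pow, lt_div_iff₀ (pow_pos ha k)] at hk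

namespace SimpleGraph

variable {V : Type*} {G : SimpleGraph V} {u v : V}

theorem Reachable.exists_isPath_forall_le [Fintype V] {α : Type*} [LinearOrder α]
    (h : G.Reachable u v) (f : G.Walk u v → α) :
    ∃ P : G.Walk u v, P.IsPath ∧ ∀ Q : G.Walk u v, Q.IsPath → f P ≤ f Q := by
  classical
  obtain ⟨P, -, hP⟩ := Finset.exists_min_image Finset.univ (fun P : G.Path u v => f P)
    ⟨h.some.toPath, Finset.mem_univ _⟩
  exact ⟨P, P.2, fun Q hQ => hP ⟨Q, hQ⟩ (Finset.mem_univ _)⟩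

namespace Walk

theorem IsPath.nil_of_nil {P Q : G.Walk u v} (hP : P.IsPath) (hQ : Q.Nil) : P.Nil := by
  obtain rfl := hQ.eq
  exact isPath_iff_nil.1 hP

variable (w : Sym2 V → ℝ)

theorem IsPath.sum_map_pow_le [Fintype V] {Q : G.Walk u v} (hQ : Q.IsPath) {μ : ℝ}
    (hμ : 0 ≤ μ) (hQμ : ∀ e ∈ Q.edges, 0 ≤ w e ∧ w e ≤ μ) (k : ℕ) :
    (Q.edges.map fun e => w e ^ k).sum ≤ Fintype.card V * μ ^ k := by
  calc (Q.edges.map fun e => w e ^ k).sum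
      ≤ (Q.edges.map fun e => w e ^ k).length • μ ^ k := by
        refine List.sum_le_card_nsmul _ _ fun x hx => ?_
        obtain ⟨e, he, rfl⟩ := List.mem_map.1 hx
        exact pow_le_pow_left₀ (hQμ e he).1 (hQμ e he).2 k
    _ ≤ Fintype.card V * μ ^ k := by
        rw [nsmul_eq_mul, List.length_map, length_edges]
        gcongr
        exact_mod_cast hQ.length_lt.le

theorem forall_edges_le_of_sum_map_pow_le [Fintype V] (hw : ∀ e ∈ G.edgeSet, 0 ≤ w e)
    {μ : ℝ} (hμ : 0 ≤ μ) {k : ℕ}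
    (hk : ∀ e ∈ G.edgeSet, μ < w e → Fintype.card V * μ ^ k < w e ^ k)
    {P Q : G.Walk u v} (hQ : Q.IsPath) (hQμ : ∀ e ∈ Q.edges, w e ≤ μ)
    (hPQ : (P.edges.map fun e => w e ^ k).sum ≤ (Q.edges.map fun e => w e ^ k).sum) :
    ∀ e ∈ P.edges, w e ≤ μ := by
  intro e he
  by_contra! heμ
  have hP_nonneg : ∀ x ∈ P.edges.map fun e => w e ^ k, 0 ≤ x := by
    intro x hx
    obtain ⟨e', he', rfl⟩ := List.mem_map.1 hx
    exact pow_nonneg (hw e' (P.edges_subset_edgeSet he')) k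
  have hQ_bound := hQ.sum_map_pow_le w hμ
    (fun e' he' => ⟨hw e' (Q.edges_subset_edgeSet he'), hQμ e' he'⟩) k
  have hPe := List.single_le_sum hP_nonneg _ (List.mem_map_of_mem (f := fun e => w e ^ k) he)
  linarith [hk e (P.edges_subset_edgeSet he) heμ]

end Walk

end SimpleGraph

/-- In a finite connected graph with edge weights all `≥ 1`, for any two vertices
`S`, `D` there is a `K` such that for all `k ≥ K`, every `S`–`D` path minimizing
the transformed length `∑_{e ∈ P} w(e) ^ k` among all `S`–`D` paths is a minimax
path: it also minimizes the maximum edge weight among all `S`–`D` paths. -/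
theorem transformed_shortest_path_is_minimax {V : Type*} [Fintype V]
    (G : SimpleGraph V) (hG : G.Connected)
    (w : Sym2 V → ℝ) (hw : ∀ e ∈ G.edgeSet, 1 ≤ w e)
    (S D : V) :
    ∃ K : ℕ, ∀ k : ℕ, K ≤ k →
      ∀ P : G.Walk S D, P.IsPath →
        (∀ Q : G.Walk S D, Q.IsPath →
          (P.edges.map (fun e => w e ^ k)).sum ≤
            (Q.edges.map (fun e => w e ^ k)).sum) →
        (∀ Q : G.Walk S D, Q.IsPath →
          (P.edges.map w).maximum ≤ (Q.edges.map w).maximum) := by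
  obtain ⟨Q₀, hQ₀, hQ₀_min⟩ :=
    (hG.preconnected S D).exists_isPath_forall_le fun Q => (Q.edges.map w).maximum
  rcases hμ : (Q₀.edges.map w).maximum with _ | μ
  · have hQ₀_nil := Walk.edges_eq_nil.1 (List.map_eq_nil_iff.1 (List.maximum_eq_bot.1 hμ))
    refine ⟨0, fun k _ P hP _ Q _ => ?_⟩
    rw [Walk.edges_eq_nil.2 (hP.nil_of_nil hQ₀_nil), List.map_nil, List.maximum_nil]
    exact bot_le
  have hQ₀μ : ∀ e ∈ Q₀.edges, w e ≤ μ := fun e he =>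
    WithBot.coe_le_coe.1 (List.le_maximum_of_mem' (List.mem_map_of_mem he) |>.trans_eq hμ)
  have hμ_pos : 0 < μ := by
    obtain ⟨e₀, he₀, rfl⟩ := List.mem_map.1 (List.maximum_mem hμ)
    exact zero_lt_one.trans_le (hw e₀ (Q₀.edges_subset_edgeSet he₀))
  obtain ⟨K, hK⟩ := eventually_atTop.1 <| (eventually_all_finite G.edgeSet.toFinite).2
    fun e _ => eventually_imp_distrib_left.2 fun he => eventually_mul_pow_lt_pow hμ_pos he _
  refine ⟨K, fun k hk P _ hP_min Q hQ =>
    (List.maximum_le_of_forall_le fun a ha => ?_).trans (hμ ▸ hQ₀_min Q hQ)⟩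
  obtain ⟨e, he, rfl⟩ := List.mem_map.1 ha
  have hw_nonneg : ∀ e ∈ G.edgeSet, 0 ≤ w e := fun e he => zero_le_one.trans (hw e he)
  exact WithBot.coe_le_coe.2 <| Walk.forall_edges_le_of_sum_map_pow_le w hw_nonneg hμ_pos.le
    (hK k hk) hQ₀ hQ₀μ (hP_min Q₀ hQ₀) e he
end

section
/- Let G be a finite connected simple graph with edge-weight function w : E(G) → ℝ such that w(e) > 1 for every edge e and w is injective on the edge set, and let T be the unique minimum spanning tree of G. Then there exists a natural number K such that for all k ≥ K and all pairs of vertices S and D, every path from S to D minimizing the transformed length ∑_{e ∈ P} w(e)^k among all S–D paths uses only edges of T (i.e., for sufficiently large exponent k, all shortest paths under the transformed weights lie on the minimum spanning tree). -/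
open SimpleGraph

/-!
By the cycle property of the minimum spanning tree `T`, every edge on the tree path between the
ends of a non-tree edge `ab` is strictly lighter than `ab`. Since there are finitely many such
pairs, for all large `k` the power `w ab ^ k` exceeds the transformed length of the tree path, so
any path through `ab` can be strictly shortened by making the detour along `T`.
-/

open Filter Topology

theorem eventually_sum_map_pow_lt {ι : Type*} {l : List ι} {c : ι → ℝ} {y : ℝ} (hy : 0 < y)
    (hl : ∀ i ∈ l, 0 ≤ c i ∧ c i < y) :
    ∀ᶠ k : ℕ in atTop, (l.map fun i => c i ^ k).sum < y ^ k := by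
  have hlim : Tendsto (fun k : ℕ => (l.map fun i => (c i / y) ^ k).sum) atTop (𝓝 0) := by
    simpa using tendsto_list_sum l fun i hi => tendsto_pow_atTop_nhds_zero_of_lt_one
      (div_nonneg (hl i hi).1 hy.le) ((div_lt_one hy).2 (hl i hi).2)
  filter_upwards [hlim.eventually (gt_mem_nhds one_pos)] with k hk
  simp only [div_pow] at hk
  simp only [div_eq_mul_inv, List.sum_map_mul_right] at hk
  simpa using (mul_inv_lt_iff₀ (pow_pos hy k)).1 hk

namespace SimpleGraph

variable {V : Type*} {G T : SimpleGraph V}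

theorem Walk.exists_eq_append_cons_of_mem_edges {u v : V} {e : Sym2 V} (p : G.Walk u v)
    (he : e ∈ p.edges) :
    ∃ (x y : V) (h : G.Adj x y) (q : G.Walk u x) (r : G.Walk y v),
      s(x, y) = e ∧ p = q.append (cons h r) := by
  induction p with
  | nil => simp at he
  | @cons u w v h p ih =>
    rcases List.mem_cons.1 he with rfl | he
    · exact ⟨u, w, h, nil, p, rfl, rfl⟩
    · obtain ⟨x, y, hxy, q, r, rfl, rfl⟩ := ih he
      exact ⟨x, y, hxy, cons h q, r, rfl, rfl⟩

/-- The edge `ab` closes a cycle with `p`, so deleting `f` keeps the graph connected; and `f`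
separates `a` from `b` in `T`, so adding `ab` to `T - f` creates no cycle. -/
theorem IsTree.isTree_sup_edge_deleteEdges (hT : T.IsTree) {a b : V} (hab : ¬T.Adj a b)
    {p : T.Walk a b} (hp : p.IsPath) {f : Sym2 V} (hf : f ∈ p.edges) :
    ((T ⊔ edge a b).deleteEdges {f}).IsTree := by
  have hne : a ≠ b := by
    rintro rfl
    simp [(Walk.isPath_iff_nil.1 hp).eq_nil] at hf
  induction f using Sym2.ind with | _ x y => ?_
  refine ⟨?_, ?_⟩
  · have hcycle : (Walk.cons (by simp [edge_adj, hne.symm]) (p.mapLe le_sup_left) :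
        (T ⊔ edge a b).Walk b b).IsCycle := by
      refine (Walk.cons_isCycle_iff _ _).2 ⟨hp.mapLe _, ?_⟩
      rw [Walk.edges_mapLe_eq_edges]
      exact fun h => hab (T.adj_symm (p.adj_of_mem_edges h))
    refine (hT.connected.mono le_sup_left).connected_delete_edge_of_not_isBridge fun hbr => ?_
    exact hbr.notMem_edges_of_isCycle hcycle (by simp [hf])
  · have hsep : ¬(T.deleteEdges {s(x, y)}).Reachable a b := by
      rw [reachable_deleteEdges_iff_exists_walk]
      rintro ⟨q, hq⟩
      classical
      have : (q.toPath : T.Walk a b) = p :=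
        congrArg Subtype.val ((hT.isAcyclic.subsingleton_path a b).elim q.toPath ⟨p, hp⟩)
      exact hq (Walk.edges_toPath_subset_edges q (this ▸ hf))
    refine ((hT.isAcyclic.anti (deleteEdges_le _)).sup_edge_of_not_reachable hsep).anti ?_
    rw [deleteEdges_sup]
    exact sup_le_sup_left (deleteEdges_le _) _

theorem totalWeight_sup_edge_deleteEdges [Fintype V] (w : Sym2 V → ℝ) {a b : V} (hab : a ≠ b)
    (he : s(a, b) ∉ T.edgeSet) {f : Sym2 V} (hf : f ∈ T.edgeSet) :
    totalWeight w ((T ⊔ edge a b).deleteEdges {f}) = totalWeight w T + w s(a, b) - w f := by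
  classical
  have hedges : ((T ⊔ edge a b).deleteEdges {f}).edgeSet.toFinite.toFinset =
      insert s(a, b) (T.edgeSet.toFinite.toFinset.erase f) := by
    ext g
    simp only [edgeSet_deleteEdges, edgeSet_sup, edgeSet_edge_of_ne hab, Set.Finite.mem_toFinset,
      Set.mem_sdiff, Set.mem_union, Set.mem_singleton_iff, Finset.mem_insert, Finset.mem_erase]
    grind
  unfold totalWeight
  rw [hedges, Finset.sum_insert (by simp [he]), Finset.sum_erase_eq_sub (by simpa using hf)]
  ring

/-- Cycle property of a minimum spanning tree: exchanging `f` for `ab` gives another spanning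
tree, whose weight exceeds that of `T` by `w ab - w f`. -/
theorem weight_lt_of_mem_edges_of_isPath [Fintype V] {w : Sym2 V → ℝ}
    (hw : Set.InjOn w G.edgeSet) (hT : IsSpanningTree G T)
    (hmin : ∀ T', IsSpanningTree G T' → totalWeight w T ≤ totalWeight w T')
    {a b : V} (hab : G.Adj a b) (he : s(a, b) ∉ T.edgeSet) {p : T.Walk a b} (hp : p.IsPath)
    {f : Sym2 V} (hf : f ∈ p.edges) : w f < w s(a, b) := by
  have hfT : f ∈ T.edgeSet := p.edges_subset_edgeSet hf
  have hexchange : IsSpanningTree G ((T ⊔ edge a b).deleteEdges {f}) :=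
    ⟨(deleteEdges_le _).trans (sup_le hT.1 ((edge_le_iff _).2 (Or.inr hab))),
      hT.2.isTree_sup_edge_deleteEdges he hp hf⟩
  have hle := hmin _ hexchange
  rw [totalWeight_sup_edge_deleteEdges w hab.ne he hfT] at hle
  refine lt_of_le_of_ne (by linarith) fun h => ?_
  exact he (hw (edgeSet_subset_edgeSet.2 hT.1 hfT) hab h ▸ hfT)

theorem Walk.sum_map_edges_bypass_le [DecidableEq V] {c : Sym2 V → ℝ}
    (hc : ∀ e ∈ G.edgeSet, 0 ≤ c e) {u v : V} (p : G.Walk u v) :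
    (p.bypass.edges.map c).sum ≤ (p.edges.map c).sum :=
  (p.edges_bypass_sublist_edges.map c).sum_le_sum fun _ hx => by
    obtain ⟨e, he, rfl⟩ := List.mem_map.1 hx
    exact hc e (p.edges_subset_edgeSet he)

theorem Walk.exists_isPath_sum_lt_of_mem_edges {c : Sym2 V → ℝ} (hc : ∀ e ∈ G.edgeSet, 0 ≤ c e)
    {u v a b : V} (p : G.Walk u v) (he : s(a, b) ∈ p.edges) (r : G.Walk a b)
    (hr : (r.edges.map c).sum < c s(a, b)) :
    ∃ q : G.Walk u v, q.IsPath ∧ (q.edges.map c).sum < (p.edges.map c).sum := by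
  classical
  obtain ⟨x, y, hxy, p₁, p₂, hexy, rfl⟩ := p.exists_eq_append_cons_of_mem_edges he
  obtain ⟨r', hr'⟩ : ∃ r' : G.Walk x y, (r'.edges.map c).sum < c s(x, y) := by
    rcases Sym2.eq_iff.1 hexy with ⟨rfl, rfl⟩ | ⟨rfl, rfl⟩
    · exact ⟨r, hr⟩
    · exact ⟨r.reverse, by simpa [Sym2.eq_swap] using hr⟩
  let q := p₁.append (r'.append p₂)
  refine ⟨q.bypass, q.bypass_isPath, (q.sum_map_edges_bypass_le hc).trans_lt ?_⟩
  simp only [q, edges_append, edges_cons, List.map_append, List.map_cons, List.sum_append,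
    List.sum_cons]
  linarith

end SimpleGraph

theorem transformed_shortest_paths_lie_on_mst_general {V : Type*} [Fintype V]
    (G : SimpleGraph V)
    (w : Sym2 V → ℝ) (hw1 : ∀ e ∈ G.edgeSet, 1 < w e)
    (hw : Set.InjOn w G.edgeSet)
    (T : SimpleGraph V) (hT : IsSpanningTree G T)
    (hmin : ∀ T', IsSpanningTree G T' → totalWeight w T ≤ totalWeight w T') :
    ∃ K : ℕ, ∀ k : ℕ, K ≤ k →
      ∀ S D : V, ∀ P : G.Walk S D, P.IsPath →
        (∀ Q : G.Walk S D, Q.IsPath →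
          (P.edges.map (fun e => w e ^ k)).sum ≤
            (Q.edges.map (fun e => w e ^ k)).sum) →
        ∀ e ∈ P.edges, e ∈ T.edgeSet := by
  classical
  have hwpos : ∀ e ∈ G.edgeSet, 0 < w e := fun e he => one_pos.trans (hw1 e he)
  have hTG : T.edgeSet ⊆ G.edgeSet := edgeSet_subset_edgeSet.2 hT.1
  let R (a b : V) : T.Path a b := (hT.2.connected a b).some.toPath
  have hdetour : ∀ᶠ k : ℕ in atTop, ∀ a b, G.Adj a b → s(a, b) ∉ T.edgeSet →
      ((R a b : T.Walk a b).edges.map fun e => w e ^ k).sum < w s(a, b) ^ k := by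
    refine eventually_all.2 fun a => eventually_all.2 fun b => ?_
    refine eventually_imp_distrib_left.2 fun hab => eventually_imp_distrib_left.2 fun he => ?_
    refine eventually_sum_map_pow_lt (hwpos _ hab) fun f hf => ⟨?_, ?_⟩
    · exact (hwpos f (hTG ((R a b : T.Walk a b).edges_subset_edgeSet hf))).le
    · exact weight_lt_of_mem_edges_of_isPath hw hT hmin hab he (R a b).isPath hf
  obtain ⟨K, hK⟩ := eventually_atTop.1 hdetour
  refine ⟨K, fun k hk S D P _ hPmin e he => by_contra fun heT => ?_⟩
  induction e using Sym2.ind with | _ a b => ?_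
  obtain ⟨Q, hQ, hlt⟩ := P.exists_isPath_sum_lt_of_mem_edges
    (fun e he => (pow_pos (hwpos e he) k).le) he ((R a b : T.Walk a b).mapLe hT.1)
    (by simpa [Walk.edges_mapLe_eq_edges] using hK k hk a b (P.adj_of_mem_edges he) heT)
  exact (hPmin Q hQ).not_gt hlt

/-- In a finite connected graph with distinct edge weights all `> 1`, with `T` the
(unique) minimum spanning tree, there is a `K` such that for all `k ≥ K` and all
pairs of vertices `S`, `D`, every `S`–`D` path minimizing the transformed length
`∑_{e ∈ P} w(e) ^ k` uses only edges of `T`. -/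
theorem transformed_shortest_paths_lie_on_mst {V : Type*} [Fintype V]
    (G : SimpleGraph V) (hG : G.Connected)
    (w : Sym2 V → ℝ) (hw1 : ∀ e ∈ G.edgeSet, 1 < w e)
    (hw : Set.InjOn w G.edgeSet)
    (T : SimpleGraph V) (hT : IsSpanningTree G T)
    (hmin : ∀ T', IsSpanningTree G T' → totalWeight w T ≤ totalWeight w T') :
    ∃ K : ℕ, ∀ k : ℕ, K ≤ k →
      ∀ S D : V, ∀ P : G.Walk S D, P.IsPath →
        (∀ Q : G.Walk S D, Q.IsPath →
          (P.edges.map (fun e => w e ^ k)).sum ≤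
            (Q.edges.map (fun e => w e ^ k)).sum) →
        ∀ e ∈ P.edges, e ∈ T.edgeSet :=
  transformed_shortest_paths_lie_on_mst_general G w hw1 hw T hT hmin
end

section
/- Let G be a finite connected simple graph with edge-weight function w : E(G) → ℝ injective on the edge set, let T be the unique minimum spanning tree of G, let S and D be two distinct vertices, and let e_max be a maximum-weight edge on the unique S–D path in T. Then every path from S to D in G contains an edge of weight at least w(e_max). -/
open SimpleGraph

lemma side_of_walk {V : Type*} {T : SimpleGraph V} {a b : V} :
    ∀ {u v : V}, T.Walk u v →
    ((T \ fromEdgeSet {s(a,b)}).Reachable a u ∨ (T \ fromEdgeSet {s(a,b)}).Reachable b u) →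
    ((T \ fromEdgeSet {s(a,b)}).Reachable a v ∨ (T \ fromEdgeSet {s(a,b)}).Reachable b v) := by
  intro u v q
  induction q with
  | nil => exact id
  | @cons u m v h q ih =>
    intro hu
    apply ih
    by_cases he : s(u, m) = s(a, b)
    · rw [Sym2.eq_iff] at he
      rcases he with ⟨rfl, rfl⟩ | ⟨rfl, rfl⟩
      · exact Or.inr (Reachable.refl _)
      · exact Or.inl (Reachable.refl _)
    · have hadj : (T \ fromEdgeSet {s(a,b)}).Adj u m := by
        simp only [sdiff_adj, fromEdgeSet_adj, Set.mem_singleton_iff]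
        exact ⟨h, by tauto⟩
      rcases hu with h1 | h1
      · exact Or.inl (h1.trans hadj.reachable)
      · exact Or.inr (h1.trans hadj.reachable)

lemma exists_crossing {V : Type*} {G T' : SimpleGraph V} {S : V} :
    ∀ {u v : V} (p : G.Walk u v), T'.Reachable S u → ¬ T'.Reachable S v →
    ∃ x y, G.Adj x y ∧ s(x,y) ∈ p.edges ∧ T'.Reachable S x ∧ ¬ T'.Reachable S y := by
  intro u v p
  induction p with
  | nil => intro h1 h2; exact absurd h1 h2
  | @cons u m v h q ih =>
    intro h1 h2
    by_cases hm : T'.Reachable S m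
    · obtain ⟨x, y, hxy, hmem, hx, hy⟩ := ih hm h2
      exact ⟨x, y, hxy, by simp [hmem], hx, hy⟩
    · exact ⟨u, m, h, by simp, h1, hm⟩

/-- In a finite connected graph with distinct edge weights, with `T` the (unique)
minimum spanning tree, `S ≠ D` two vertices, and `e_max` a maximum-weight edge on
the unique `S`–`D` path in `T`, every `S`–`D` path in `G` contains an edge of
weight at least `w(e_max)`. -/
theorem every_path_has_heavy_edge {V : Type*} [Fintype V]
    (G : SimpleGraph V) (hG : G.Connected)
    (w : Sym2 V → ℝ) (hw : Set.InjOn w G.edgeSet)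
    (T : SimpleGraph V) (hT : IsSpanningTree G T)
    (hmin : ∀ T', IsSpanningTree G T' → totalWeight w T ≤ totalWeight w T')
    (S D : V) (hSD : S ≠ D)
    (pT : T.Walk S D) (hpT : pT.IsPath)
    (emax : Sym2 V) (hemax : emax ∈ pT.edges)
    (hmaxw : ∀ e ∈ pT.edges, w e ≤ w emax) :
    ∀ p : G.Walk S D, p.IsPath → ∃ e ∈ p.edges, w emax ≤ w e := by
  classical
  intro p hp
  by_contra hcon
  push_neg at hcon
  have hTconn := hT.2.isConnected
  have hemaxT : emax ∈ T.edgeSet := pT.edges_subset_edgeSet hemax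
  -- orient emax = s(a,b) so that S is on the `a` side after deleting emax
  obtain ⟨a, b, heq, hab, haS⟩ :
      ∃ a b, emax = s(a, b) ∧ T.Adj a b ∧ (T \ fromEdgeSet {s(a,b)}).Reachable a S := by
    clear hcon hmaxw hemax
    induction emax using Sym2.ind with
    | _ a b =>
      have hab : T.Adj a b := hemaxT
      rcases side_of_walk (a := a) (b := b) ((hTconn.preconnected a S).some)
          (Or.inl (Reachable.refl _)) with h | h
      · exact ⟨a, b, rfl, hab, h⟩
      · refine ⟨b, a, Sym2.eq_swap.symm, hab.symm, ?_⟩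
        rwa [Sym2.eq_swap]
  subst heq
  set T' := T \ fromEdgeSet {s(a,b)} with hT'def
  -- S and D are separated after deleting emax
  have hSD' : ¬ T'.Reachable S D := by
    rintro ⟨q⟩
    have hsub : ∀ e ∈ q.edges, e ∈ T.edgeSet := fun e he =>
      edgeSet_mono sdiff_le (q.edges_subset_edgeSet he)
    have huniq : (⟨_, hpT⟩ : T.Path S D) = (q.transfer T hsub).toPath :=
      hT.2.IsAcyclic.path_unique _ _
    have hmem : s(a,b) ∈ (q.transfer T hsub).edges := by
      have h1 : s(a,b) ∈ ((q.transfer T hsub).toPath : T.Walk S D).edges := by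
        rw [← huniq]; exact hemax
      exact Walk.edges_toPath_subset _ h1
    rw [Walk.edges_transfer] at hmem
    have := q.edges_subset_edgeSet hmem
    rw [hT'def, edgeSet_sdiff, edgeSet_fromEdgeSet] at this
    simp [Sym2.isDiag_iff_proj_eq, hab.ne] at this
  -- find a crossing edge on p
  obtain ⟨x, y, hxy, hxyp, hx, hy⟩ := exists_crossing p (Reachable.refl S) hSD'
  have hwxy : w s(x,y) < w s(a,b) := hcon _ hxyp
  have hxyT' : ¬ T'.Adj x y := fun h => hy (hx.trans h.reachable)
  set T'' := T' ⊔ fromEdgeSet {s(x,y)} with hT''def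
  have hT''G : T'' ≤ G := by
    refine sup_le (le_trans sdiff_le hT.1) ?_
    have : ({s(x,y)} : Set (Sym2 V)) ⊆ G.edgeSet := by
      simp [Set.singleton_subset_iff, hxy]
    exact (fromEdgeSet_mono this).trans_eq (fromEdgeSet_edgeSet G)
  have hle'' : T' ≤ T'' := le_sup_left
  have haSx : T'.Reachable a x := haS.trans hx
  have hby : T'.Reachable b y := by
    rcases side_of_walk (a := a) (b := b) ((hTconn.preconnected a y).some)
        (Or.inl (Reachable.refl _)) with h | h
    · exact absurd (haS.symm.trans h) hy
    · exact h
  have hxy'' : T''.Adj x y := Or.inr ⟨rfl, hxy.ne⟩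
  have hT''conn : T''.Connected := by
    have hreach : ∀ v, T''.Reachable a v := by
      intro v
      have hab'' : T''.Reachable a b :=
        ((haSx.mono hle'').trans hxy''.reachable).trans (hby.mono hle'').symm
      rcases side_of_walk (a := a) (b := b) ((hTconn.preconnected a v).some)
          (Or.inl (Reachable.refl _)) with h | h
      · exact h.mono hle''
      · exact hab''.trans (h.mono hle'')
    haveI : Nonempty V := ⟨S⟩
    exact Connected.mk fun u v => (hreach u).symm.trans (hreach v)
  have hT''acyc : T''.IsAcyclic := by
    intro v c hc
    by_cases he : s(x,y) ∈ c.edges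
    · have hr : (T'' \ fromEdgeSet {s(x,y)}).Reachable x y :=
        (adj_and_reachable_delete_edges_iff_exists_cycle.mpr ⟨v, c, hc, he⟩).2
      have hle : (T'' \ fromEdgeSet {s(x,y)}) ≤ T' := by
        intro u u' h
        simp only [hT''def, sdiff_adj, sup_adj, fromEdgeSet_adj, Set.mem_singleton_iff] at h
        tauto
      exact hy (hx.trans (hr.mono hle))
    · have hsub : ∀ e ∈ c.edges, e ∈ T.edgeSet := by
        intro e hec
        have hmem := c.edges_subset_edgeSet hec
        rw [hT''def, edgeSet_sup, edgeSet_fromEdgeSet] at hmem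
        rcases hmem with h | h
        · exact edgeSet_mono sdiff_le h
        · exact absurd (h.1 : e = s(x,y)) (fun h' => he (h' ▸ hec))
      exact hT.2.IsAcyclic (c.transfer T hsub) (hc.transfer hsub)
  -- weight computation
  have hnd : ¬ s(x,y).IsDiag := by simp [hxy.ne]
  have hEdges : T''.edgeSet.toFinite.toFinset
      = insert s(x,y) ((T.edgeSet.toFinite.toFinset).erase s(a,b)) := by
    ext e
    simp only [Set.Finite.mem_toFinset, Finset.mem_insert, Finset.mem_erase,
      Set.Finite.mem_toFinset, hT''def, hT'def, edgeSet_sup, edgeSet_sdiff,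
      edgeSet_fromEdgeSet, Set.mem_union, Set.mem_diff, Set.mem_singleton_iff,
      Set.mem_setOf_eq]
    constructor
    · rintro (⟨heT, hnot⟩ | ⟨rfl, _⟩)
      · refine Or.inr ⟨fun h => hnot ⟨h, by rw [h]; simp [hab.ne]⟩, heT⟩
      · exact Or.inl rfl
    · rintro (rfl | ⟨hne, heT⟩)
      · exact Or.inr ⟨rfl, hnd⟩
      · exact Or.inl ⟨heT, fun h => hne h.1⟩
  have hnotmem : s(x,y) ∉ (T.edgeSet.toFinite.toFinset).erase s(a,b) := by
    simp only [Finset.mem_erase, Set.Finite.mem_toFinset]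
    rintro ⟨hne, hmem⟩
    exact hxyT' (by
      rw [hT'def]
      simp only [sdiff_adj, fromEdgeSet_adj, Set.mem_singleton_iff]
      exact ⟨hmem, by tauto⟩)
  have hmem_ab : s(a,b) ∈ T.edgeSet.toFinite.toFinset := by
    simpa using hab
  have hsum : totalWeight w T'' = w s(x,y) + (totalWeight w T - w s(a,b)) := by
    rw [totalWeight, totalWeight, hEdges, Finset.sum_insert hnotmem,
      Finset.sum_erase_eq_sub hmem_ab]
  have hmin' := hmin T'' ⟨hT''G, ⟨hT''conn, hT''acyc⟩⟩
  rw [hsum] at hmin'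
  linarith
end
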